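/- For every n ∈ ℕ with n ≥ 1, every real x > 0, and every h ∈ ℂ with Re(h) > 1, the series below converge absolutely and the generalized (h,q)-Bernoulli polynomial attached to χ satisfies β_{n,χ,q}^h(x) = (h−1)(1−q) · Σ_{m=0}^{∞} q^{(h−1)m}·χ(m)·[x+m]_q^{n} − n · Σ_{m=0}^{∞} q^{hm+x}·χ(m)·[x+m]_q^{n−1}. -/

import Mathlib

open Complex Finset Filter

/-- Complex power `q^z := exp(z·log q)` for a real base `q`. -/
noncomputable def qcpow (q : ℝ) (z : ℂ) : ℂ := Complex.exp (z * (Real.log q : ℂ))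

/-- The complex `q`-number `[z]_q = (1 - q^z)/(1 - q)`. -/
noncomputable def qnum (q : ℝ) (z : ℂ) : ℂ := (1 - qcpow q z) / (1 - (q : ℂ))

/-- The real `q`-number `[y]_q = (1 - q^y)/(1 - q)` for real `y`. -/
noncomputable def qnumR (q : ℝ) (y : ℝ) : ℝ := (1 - Real.exp (y * Real.log q)) / (1 - q)

/-- The `(h,q)`-Bernoulli polynomial
`β_{n,q}^h(x) = (1-q)^{-n} ∑_{l=0}^{n} C(n,l) (-1)^l q^{lx} (l+h-1)/[l+h-1]_q`. -/
noncomputable def qbeta (q : ℝ) (h : ℂ) (n : ℕ) (x : ℝ) : ℂ :=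
  (1 - (q : ℂ))⁻¹ ^ n * ∑ l ∈ Finset.range (n + 1),
    (n.choose l : ℂ) * (-1) ^ l * qcpow q ((l : ℂ) * (x : ℂ)) *
      (((l : ℂ) + h - 1) / qnum q ((l : ℂ) + h - 1))

/-- The generalized `(h,q)`-Bernoulli polynomial attached to a Dirichlet character `χ` mod `f`:
`β_{n,χ,q}^h(x) = [f]_q^{n-1} ∑_{a=0}^{f-1} χ(a) q^{(h-1)a} β_{n,q^f}^h((x+a)/f)`. -/
noncomputable def qbetaChi (q : ℝ) (h : ℂ) (f : ℕ) (χ : DirichletCharacter ℂ f)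
    (n : ℕ) (x : ℝ) : ℂ :=
  qnum q (f : ℂ) ^ ((n : ℤ) - 1) * ∑ a ∈ Finset.range f,
    χ (a : ZMod f) * qcpow q ((h - 1) * (a : ℂ)) * qbeta (q ^ f) h n ((x + a) / f)

/-!
For `Re w > 0` the geometric series gives `w / [w]_q = w (1 - q) ∑_m q^{wm}`. Substituting this
into the definition of `β_{k+1,q}^h(x)` (with `w = l + h - 1`) and exchanging the finite sum over
`l` with the series, the sum over `l` is a binomial sum in `t = q^{x+m}`, evaluated by
`∑ C(k+1,l) (-1)^l (l + c) t^l = c (1-t)^{k+1} - (k+1) t (1-t)^k`; since `1 - t = (1 - q)[x+m]_q`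
this yields the series for `β_{k+1,q}^h(x)`. Replacing `q, x` by `q^f, (x+a)/f` and using
`[y/f]_{q^f} = [y]_q / [f]_q`, the `m`-th term becomes `[f]_q^{-k} q^{-(h-1)a}` times the
`(a + fm)`-th term for `q, x`; as `χ` is `f`-periodic, summing over the residues `a` mod `f`
reassembles the series over all `m`.
-/

lemma qcpow_add (q : ℝ) (z w : ℂ) : qcpow q (z + w) = qcpow q z * qcpow q w := by
  simp only [qcpow, add_mul, Complex.exp_add]

lemma qcpow_natCast_mul (q : ℝ) (m : ℕ) (z : ℂ) : qcpow q (m * z) = qcpow q z ^ m := by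
  rw [qcpow, mul_assoc, Complex.exp_nat_mul]; rfl

lemma qcpow_pow (q : ℝ) (f : ℕ) (z : ℂ) : qcpow (q ^ f) z = qcpow q (f * z) := by
  simp only [qcpow, Real.log_pow]
  push_cast
  ring_nf

lemma qcpow_ofReal (q y : ℝ) : qcpow q y = (Real.exp (y * Real.log q) : ℂ) := by
  rw [qcpow, ← Complex.ofReal_mul, Complex.ofReal_exp]

lemma norm_qcpow (q : ℝ) (z : ℂ) : ‖qcpow q z‖ = Real.exp (z.re * Real.log q) := by
  rw [qcpow, Complex.norm_exp, Complex.re_mul_ofReal]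

lemma norm_qcpow_lt_one {q : ℝ} (hq0 : 0 < q) (hq1 : q < 1) {z : ℂ} (hz : 0 < z.re) :
    ‖qcpow q z‖ < 1 := by
  rw [norm_qcpow, Real.exp_lt_one_iff]
  exact mul_neg_of_pos_of_neg hz (Real.log_neg hq0 hq1)

lemma ofReal_qnumR (q y : ℝ) : (qnumR q y : ℂ) = qnum q y := by
  rw [qnumR, qnum, qcpow_ofReal]
  push_cast
  rfl

lemma one_sub_qcpow_eq_mul_qnum {q : ℝ} (hq : q ≠ 1) (z : ℂ) :
    1 - qcpow q z = (1 - q) * qnum q z := by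
  have : (1 : ℂ) - q ≠ 0 := sub_ne_zero.mpr (mod_cast hq.symm)
  rw [qnum, mul_div_cancel₀ _ this]

lemma qnumR_nonneg {q : ℝ} (hq0 : 0 < q) (hq1 : q < 1) {y : ℝ} (hy : 0 ≤ y) :
    0 ≤ qnumR q y := by
  have : Real.exp (y * Real.log q) ≤ 1 :=
    Real.exp_le_one_iff.mpr (mul_nonpos_of_nonneg_of_nonpos hy (Real.log_neg hq0 hq1).le)
  exact div_nonneg (by linarith) (by linarith)

lemma qnumR_pos {q : ℝ} (hq0 : 0 < q) (hq1 : q < 1) {y : ℝ} (hy : 0 < y) : 0 < qnumR q y := by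
  have : Real.exp (y * Real.log q) < 1 :=
    Real.exp_lt_one_iff.mpr (mul_neg_of_pos_of_neg hy (Real.log_neg hq0 hq1))
  exact div_pos (by linarith) (by linarith)

lemma qnumR_le_inv_one_sub {q : ℝ} (hq1 : q < 1) (y : ℝ) : qnumR q y ≤ (1 - q)⁻¹ := by
  rw [qnumR, div_eq_mul_inv]
  exact mul_le_of_le_one_left (inv_nonneg.mpr (by linarith))
    (by linarith [Real.exp_pos (y * Real.log q)])

lemma qnumR_pow_div {q : ℝ} (hq0 : 0 < q) (hq1 : q ≠ 1) {f : ℕ} (hf : f ≠ 0) (y : ℝ) :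
    qnumR (q ^ f) (y / f) = qnumR q y / qnumR q f := by
  have hexp : Real.exp (f * Real.log q) = q ^ f := by rw [Real.exp_nat_mul, Real.exp_log hq0]
  have hy : y / f * (f * Real.log q) = y * Real.log q := by field_simp
  rw [qnumR, qnumR, qnumR, hexp, Real.log_pow, hy,
    div_div_div_cancel_right₀ (sub_ne_zero.mpr hq1.symm)]

lemma summable_qcpow_mul {q : ℝ} (hq0 : 0 < q) (hq1 : q < 1) {w : ℂ} (hw : 0 < w.re)
    {g : ℕ → ℂ} {C : ℝ} (hg : ∀ m, ‖g m‖ ≤ C) :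
    Summable fun m : ℕ => qcpow q (w * m) * g m := by
  refine .of_norm_bounded
    ((summable_geometric_of_lt_one (norm_nonneg _) (norm_qcpow_lt_one hq0 hq1 hw)).mul_right C)
    fun m => ?_
  rw [norm_mul, mul_comm w, qcpow_natCast_mul, norm_pow]
  exact mul_le_mul_of_nonneg_left (hg m) (by positivity)

lemma summable_qcpow_mul_qnumR_pow {q : ℝ} (hq0 : 0 < q) (hq1 : q < 1) {w : ℂ} (hw : 0 < w.re)
    {c : ℕ → ℂ} (hc : ∀ m, ‖c m‖ ≤ 1) {x : ℝ} (hx : 0 ≤ x) (j : ℕ) :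
    Summable fun m : ℕ => qcpow q (w * m) * c m * (qnumR q (x + m) : ℂ) ^ j := by
  refine (summable_qcpow_mul hq0 hq1 hw (C := (1 - q)⁻¹ ^ j) fun m => ?_).congr
    fun m => (mul_assoc ..).symm
  have hr := qnumR_nonneg hq0 hq1 (by positivity : 0 ≤ x + m)
  rw [norm_mul, norm_pow, Complex.norm_real, Real.norm_of_nonneg hr, ← one_mul ((1 - q)⁻¹ ^ j)]
  exact mul_le_mul (hc m) (pow_le_pow_left₀ hr (qnumR_le_inv_one_sub hq1 _) j) (by positivity)
    zero_le_one

lemma hasSum_div_qnum {q : ℝ} (hq0 : 0 < q) (hq1 : q < 1) {w : ℂ} (hw : 0 < w.re) :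
    HasSum (fun m : ℕ => w * (1 - q) * qcpow q (w * m)) (w / qnum q w) := by
  have hgeom := (hasSum_geometric_of_norm_lt_one (norm_qcpow_lt_one hq0 hq1 hw)).mul_left
    (w * (1 - q))
  rw [qnum, div_div_eq_mul_div, div_eq_mul_inv]
  simpa only [mul_comm w, qcpow_natCast_mul] using hgeom

lemma sum_range_choose_mul_neg_one_pow_mul_pow {R : Type*} [CommRing R] (n : ℕ) (t : R) :
    ∑ l ∈ range (n + 1), (n.choose l : R) * (-1) ^ l * t ^ l = (1 - t) ^ n := by
  rw [sub_eq_neg_add, add_pow]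
  refine sum_congr rfl fun l _ => ?_
  rw [one_pow, neg_pow]
  ring

lemma sum_range_choose_mul_neg_one_pow_mul_natCast_mul_pow {R : Type*} [CommRing R] (k : ℕ)
    (t : R) : ∑ l ∈ range (k + 2), ((k + 1).choose l : R) * (-1) ^ l * l * t ^ l
      = -(k + 1) * t * (1 - t) ^ k := by
  rw [sum_range_succ', Nat.cast_zero, mul_zero, zero_mul, add_zero,
    ← sum_range_choose_mul_neg_one_pow_mul_pow, mul_sum]
  refine sum_congr rfl fun l _ => ?_
  have hchoose := congrArg (Nat.cast (R := R)) (Nat.add_one_mul_choose_eq k l)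
  push_cast at hchoose ⊢
  linear_combination -(-1) ^ (l + 1) * t ^ (l + 1) * hchoose

/-- The `m`-th term of the series for `β_{k+1,q}^h(x)`; indexing by `k = n - 1` avoids truncated
subtraction. -/
noncomputable def qbetaTerm (q : ℝ) (h : ℂ) (k : ℕ) (x : ℝ) (m : ℕ) : ℂ :=
  (h - 1) * (1 - q) * qcpow q ((h - 1) * m) * (qnumR q (x + m) : ℂ) ^ (k + 1)
    - (k + 1) * qcpow q (h * m + x) * (qnumR q (x + m) : ℂ) ^ k

lemma qbetaTerm_eq_sum {q : ℝ} (hq : q ≠ 1) (h : ℂ) (k : ℕ) (x : ℝ) (m : ℕ) :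
    qbetaTerm q h k x m = (1 - (q : ℂ))⁻¹ ^ (k + 1) * ∑ l ∈ range (k + 2),
      ((k + 1).choose l : ℂ) * (-1) ^ l * qcpow q (l * x) *
        ((l + h - 1) * (1 - q) * qcpow q ((l + h - 1) * m)) := by
  rw [qbetaTerm]
  set t := qcpow q (x + m)
  set E := qcpow q ((h - 1) * m)
  have hterm : ∀ l : ℕ, ((k + 1).choose l : ℂ) * (-1) ^ l * qcpow q (l * x) *
        ((l + h - 1) * (1 - q) * qcpow q ((l + h - 1) * m))
      = (1 - q) * E * ((h - 1) * (((k + 1).choose l : ℂ) * (-1) ^ l * t ^ l)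
          + ((k + 1).choose l : ℂ) * (-1) ^ l * l * t ^ l) := by
    intro l
    have : qcpow q (l * x) * qcpow q ((l + h - 1) * m) = t ^ l * E := by
      rw [← qcpow_natCast_mul, ← qcpow_add, ← qcpow_add]
      ring_nf
    linear_combination (((k + 1).choose l : ℂ) * (-1) ^ l * (l + h - 1) * (1 - q)) * this
  have h1t : 1 - t = (1 - q) * qnumR q (x + m) := by
    rw [ofReal_qnumR, ← one_sub_qcpow_eq_mul_qnum hq]
    push_cast
    rfl
  have hEt : E * t = qcpow q (h * m + x) := by
    rw [← qcpow_add]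
    ring_nf
  have hinv : (1 - (q : ℂ))⁻¹ ^ (k + 1) * (1 - q) ^ (k + 1) = 1 := by
    rw [← mul_pow, inv_mul_cancel₀ (sub_ne_zero.mpr (mod_cast hq.symm)), one_pow]
  rw [sum_congr rfl fun l _ => hterm l, ← mul_sum, sum_add_distrib, ← mul_sum,
    sum_range_choose_mul_neg_one_pow_mul_pow, sum_range_choose_mul_neg_one_pow_mul_natCast_mul_pow,
    h1t, ← hEt, mul_pow, mul_pow]
  set r : ℂ := (qnumR q (x + m) : ℂ)
  linear_combination ((k + 1) * E * t * r ^ k - (h - 1) * (1 - q) * E * r ^ (k + 1)) * hinv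

theorem hasSum_qbetaTerm {q : ℝ} (hq0 : 0 < q) (hq1 : q < 1) {h : ℂ} (hh : 1 < h.re) (k : ℕ)
    (x : ℝ) : HasSum (qbetaTerm q h k x) (qbeta q h (k + 1) x) := by
  have hw (l : ℕ) : 0 < ((l : ℂ) + h - 1).re := by
    simp only [sub_re, add_re, natCast_re, one_re]
    linarith [l.cast_nonneg (α := ℝ)]
  have hterm (l : ℕ) := (hasSum_div_qnum hq0 hq1 (hw l)).mul_left
    (((k + 1).choose l : ℂ) * (-1) ^ l * qcpow q (l * x))
  rw [qbeta, show qbetaTerm q h k x = _ from funext (qbetaTerm_eq_sum hq1.ne h k x)]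
  exact (hasSum_sum fun l _ => hterm l).mul_left _

lemma qbetaTerm_add_mul {q : ℝ} (hq0 : 0 < q) (hq1 : q < 1) {f : ℕ} (hf : f ≠ 0)
    (h : ℂ) (k : ℕ) (x : ℝ) (a m : ℕ) : qbetaTerm q h k x (a + f * m)
      = qnumR q f ^ k * qcpow q ((h - 1) * a) * qbetaTerm (q ^ f) h k ((x + a) / f) m := by
  have hy : (x + a) / f + m = (x + (a + f * m : ℕ)) / f := by
    push_cast
    field_simp
    ring
  have h1qf : (1 : ℂ) - (q ^ f : ℝ) = (1 - q) * qnumR q f := by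
    rw [ofReal_qnumR, ← one_sub_qcpow_eq_mul_qnum hq1.ne, qcpow_ofReal, Real.exp_nat_mul,
      Real.exp_log hq0]
  have hE : qcpow q ((h - 1) * (a + f * m : ℕ))
      = qcpow q ((h - 1) * a) * qcpow q (f * ((h - 1) * m)) := by
    rw [← qcpow_add]
    push_cast
    ring_nf
  have hE' : qcpow q (h * (a + f * m : ℕ) + x)
      = qcpow q ((h - 1) * a) * qcpow q (f * (h * m + ((x + a) / f : ℝ))) := by
    rw [← qcpow_add]
    push_cast
    field_simp
    ring_nf
  have hr : qnumR q (x + (a + f * m : ℕ))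
      = qnumR q f * qnumR (q ^ f) ((x + (a + f * m : ℕ)) / f) := by
    rw [qnumR_pow_div hq0 hq1.ne hf, mul_div_cancel₀ _ (qnumR_pos hq0 hq1 (by positivity)).ne']
  rw [qbetaTerm, qbetaTerm, hy, hr, qcpow_pow, qcpow_pow, hE, hE', h1qf]
  push_cast
  ring

lemma sum_zmod_val_eq_sum_range {M : Type*} [AddCommMonoid M] (f : ℕ) [NeZero f] (g : ℕ → M) :
    ∑ j : ZMod f, g j.val = ∑ a ∈ range f, g a := by
  refine sum_nbij' (fun j => j.val) (fun a => (a : ZMod f)) ?_ ?_ ?_ ?_ ?_ <;>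
    simp_all [ZMod.val_lt, mem_range, Nat.mod_eq_of_lt]

theorem qbetaChi_eq_tsum_mul_qbetaTerm {q : ℝ} (hq0 : 0 < q) (hq1 : q < 1) {h : ℂ}
    (hh : 1 < h.re) {f : ℕ} [NeZero f] (χ : DirichletCharacter ℂ f) (k : ℕ) (x : ℝ)
    (hs : Summable fun m : ℕ => χ m * qbetaTerm q h k x m) :
    qbetaChi q h f χ (k + 1) x = ∑' m : ℕ, χ m * qbetaTerm q h k x m := by
  have hresidue (a : ℕ) : (qnumR q f : ℂ) ^ k *
      (χ a * qcpow q ((h - 1) * a) * qbeta (q ^ f) h (k + 1) ((x + a) / f))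
        = ∑' m : ℕ, χ (a + f * m : ℕ) * qbetaTerm q h k x (a + f * m) := by
    rw [← (hasSum_qbetaTerm (pow_pos hq0 f) (pow_lt_one₀ hq0.le hq1 (NeZero.ne f)) hh k
      _).tsum_eq, ← tsum_mul_left, ← tsum_mul_left]
    refine tsum_congr fun m => ?_
    rw [qbetaTerm_add_mul hq0 hq1 (NeZero.ne f)]
    simp only [Nat.cast_add, Nat.cast_mul, ZMod.natCast_self, zero_mul, add_zero]
    ring
  have hpow : qnum q f ^ (((k + 1 : ℕ) : ℤ) - 1) = (qnumR q f : ℂ) ^ k := by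
    rw [ofReal_qnumR, ofReal_natCast, Nat.cast_succ, add_sub_cancel_right, zpow_natCast]
  rw [Nat.sumByResidueClasses hs f, sum_zmod_val_eq_sum_range f
      fun a => ∑' m : ℕ, χ (a + f * m : ℕ) * qbetaTerm q h k x (a + f * m),
    qbetaChi, hpow, mul_sum]
  exact sum_congr rfl fun a _ => hresidue a

/-- series representation of `β_{n,χ,q}^h(x)` for `n ≥ 1`, `x > 0`. -/
theorem qbetaChi_eq_tsum (q : ℝ) (hq0 : 0 < q) (hq1 : q < 1)
    (h : ℂ) (hh : 1 < h.re) (f : ℕ) (hf : 1 ≤ f) (χ : DirichletCharacter ℂ f)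
    (n : ℕ) (hn : 1 ≤ n) (x : ℝ) (hx : 0 < x) :
    Summable (fun m : ℕ => qcpow q ((h - 1) * (m : ℂ)) * χ (m : ZMod f) *
      ((qnumR q (x + m) : ℂ) ^ n)) ∧
    Summable (fun m : ℕ => qcpow q (h * (m : ℂ) + (x : ℂ)) * χ (m : ZMod f) *
      ((qnumR q (x + m) : ℂ) ^ (n - 1))) ∧
    qbetaChi q h f χ n x =
      (h - 1) * (1 - (q : ℂ)) *
        (∑' m : ℕ, qcpow q ((h - 1) * (m : ℂ)) * χ (m : ZMod f) * ((qnumR q (x + m) : ℂ) ^ n)) -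
      (n : ℂ) *
        ∑' m : ℕ, qcpow q (h * (m : ℂ) + (x : ℂ)) * χ (m : ZMod f) *
          ((qnumR q (x + m) : ℂ) ^ (n - 1)) := by
  have : NeZero f := ⟨by omega⟩
  obtain ⟨k, rfl⟩ : ∃ k, n = k + 1 := ⟨n - 1, by omega⟩
  rw [Nat.add_sub_cancel]
  have hS₁ := summable_qcpow_mul_qnumR_pow hq0 hq1 (w := h - 1)
    (by simp only [sub_re, one_re]; linarith)
    (fun m => χ.norm_le_one m) hx.le (k + 1)
  have hS₂ : Summable fun m : ℕ => qcpow q (h * m + x) * χ m * (qnumR q (x + m) : ℂ) ^ k :=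
    ((summable_qcpow_mul_qnumR_pow hq0 hq1 (w := h) (by linarith) (fun m => χ.norm_le_one m)
      hx.le k).mul_right (qcpow q x)).congr fun m => by rw [qcpow_add]; ring
  have hterm (m : ℕ) : χ m * qbetaTerm q h k x m
      = (h - 1) * (1 - q) * (qcpow q ((h - 1) * m) * χ m * (qnumR q (x + m) : ℂ) ^ (k + 1))
        - (k + 1 : ℕ) * (qcpow q (h * m + x) * χ m * (qnumR q (x + m) : ℂ) ^ k) := by
    rw [qbetaTerm]
    push_cast
    ring
  refine ⟨hS₁, hS₂, ?_⟩
  rw [qbetaChi_eq_tsum_mul_qbetaTerm hq0 hq1 hh χ k x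
      (((hS₁.mul_left _).sub (hS₂.mul_left _)).congr fun m => (hterm m).symm),
    tsum_congr hterm, (hS₁.mul_left _).tsum_sub (hS₂.mul_left _), tsum_mul_left, tsum_mul_left]
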